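/- arXiv:2402.13009 — 14 statements merged into one kernel-verified Lean document; each statement's English description precedes it below -/
import Mathlib

section
/- Let N be a finite set of voters and let 𝒞 be an M-winning coalition set on N. Then any two members of 𝒞 have nonempty intersection; consequently, for every profile R : N → Bool there do not exist C, C' ∈ 𝒞 and x : Bool with R i = x for all i ∈ C and R j = !x for all j ∈ C'. Hence at every profile there is exactly one x : Bool that is unanimously supported by some member of 𝒞. -/
/-- A rule is strategy-proof if whenever a voter's misreport would give his true
preference, truthful reporting gives it as well. -/
def StrategyProof {N : Type*} [DecidableEq N] (f : (N → Bool) → Bool) : Prop :=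
  ∀ (R : N → Bool) (i : N) (b : Bool), f (Function.update R i b) = R i → f R = R i

/-- A rule is neutral if it commutes with flipping the two candidates. -/
def Neutral {N : Type*} (f : (N → Bool) → Bool) : Prop :=
  ∀ R : N → Bool, f (fun i => !(R i)) = !(f R)

/-- An M-winning coalition set: nonempty, members nonempty, minimality (P1),
and Moulin's property (P2). -/
def IsMWCS {N : Type*} [DecidableEq N] (𝒞 : Set (Finset N)) : Prop :=
  𝒞.Nonempty ∧ (∀ C ∈ 𝒞, C.Nonempty) ∧
    (∀ C ∈ 𝒞, ∀ C' ∈ 𝒞, C ⊆ C' → C = C') ∧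
    (∀ C : Finset N, (∃ C' ∈ 𝒞, C' ⊆ C) ↔ ∀ C'' ∈ 𝒞, (C ∩ C'').Nonempty)

/-- `f` is the M-winning coalition rule associated with `𝒞`. -/
def IsMWCRule {N : Type*} (𝒞 : Set (Finset N)) (f : (N → Bool) → Bool) : Prop :=
  ∀ (R : N → Bool) (x : Bool), f R = x ↔ ∃ C ∈ 𝒞, ∀ i ∈ C, R i = x

/-- `g` is the sequential unanimity rule associated with the sequence `S`. -/
def IsSURule {N : Type*} {K : ℕ} (S : Fin K → Finset N) (g : (N → Bool) → Bool) : Prop :=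
  ∀ (R : N → Bool) (x : Bool),
    g R = x ↔ ∃ k : Fin K, (∀ i ∈ S k, R i = x) ∧
      ∀ l < k, ∃ i ∈ S l, ∃ j ∈ S l, R i ≠ R j

/-- Any two members of an M-winning coalition set intersect; hence no two members can be
unanimous for opposite candidates, and at every profile exactly one candidate is
unanimously supported by some member. -/
theorem stmt1 {N : Type*} [Fintype N] [DecidableEq N] (𝒞 : Set (Finset N))
    (h𝒞 : IsMWCS 𝒞) :
    (∀ C ∈ 𝒞, ∀ C' ∈ 𝒞, (C ∩ C').Nonempty) ∧
    (∀ R : N → Bool, ¬ ∃ C ∈ 𝒞, ∃ C' ∈ 𝒞, ∃ x : Bool,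
        (∀ i ∈ C, R i = x) ∧ (∀ j ∈ C', R j = !x)) ∧
    (∀ R : N → Bool, ∃! x : Bool, ∃ C ∈ 𝒞, ∀ i ∈ C, R i = x) := by
  obtain ⟨hne, hmem, hP1, hP2⟩ := h𝒞
  have hint : ∀ C ∈ 𝒞, ∀ C' ∈ 𝒞, (C ∩ C').Nonempty := by
    intro C hC C' hC'
    exact ((hP2 C).mp ⟨C, hC, subset_rfl⟩) C' hC'
  have hno : ∀ R : N → Bool, ¬ ∃ C ∈ 𝒞, ∃ C' ∈ 𝒞, ∃ x : Bool,
      (∀ i ∈ C, R i = x) ∧ (∀ j ∈ C', R j = !x) := by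
    rintro R ⟨C, hC, C', hC', x, hx, hx'⟩
    obtain ⟨i, hi⟩ := hint C hC C' hC'
    simp only [Finset.mem_inter] at hi
    have := hx i hi.1
    have := hx' i hi.2
    simp_all
  refine ⟨hint, hno, ?_⟩
  intro R
  have hex : ∃ x : Bool, ∃ C ∈ 𝒞, ∀ i ∈ C, R i = x := by
    by_cases h : ∃ C' ∈ 𝒞, C' ⊆ Finset.univ.filter (fun i => R i = true)
    · obtain ⟨C', hC', hsub⟩ := h
      exact ⟨true, C', hC', fun i hi => by simpa using (Finset.mem_filter.mp (hsub hi)).2⟩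
    · rw [hP2] at h
      push_neg at h
      obtain ⟨C'', hC'', hempty⟩ := h
      refine ⟨false, C'', hC'', fun i hi => ?_⟩
      by_contra hri
      exact (Finset.not_nonempty_iff_eq_empty.mpr hempty) ⟨i, Finset.mem_inter.mpr ⟨Finset.mem_filter.mpr ⟨Finset.mem_univ i,
        by simpa using hri⟩, hi⟩⟩
  obtain ⟨x, hx⟩ := hex
  refine ⟨x, hx, fun y hy => ?_⟩
  by_contra hxy
  obtain ⟨C, hC, hCx⟩ := hx
  obtain ⟨C', hC', hCy⟩ := hy
  have : y = !x := by cases x <;> cases y <;> simp_all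
  exact hno R ⟨C, hC, C', hC', x, hCx, this ▸ hCy⟩
end

section
/- (Forward direction of Moulin's theorem.) Let N be a finite set of voters, 𝒞 an M-winning coalition set on N, and f the M-winning coalition rule associated with 𝒞. Then f is neutral and strategy-proof. -/
/-
The rule elects `x` exactly when some winning coalition votes unanimously for `x`. This
criterion is symmetric in the two candidates, which gives neutrality, and it is monotone in
the set of supporters of `x`. Compared with any misreport of voter `i`, the truthful profile
has at least as many supporters of `R i`; so if the misreport elects `R i`, so does the truth.
-/

namespace IsMWCRule

variable {N : Type*} {𝒞 : Set (Finset N)} {f : (N → Bool) → Bool}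

theorem neutral (hf : IsMWCRule 𝒞 f) : Neutral f := by
  intro R
  obtain ⟨C, hC, hCR⟩ := (hf R (f R)).mp rfl
  exact (hf _ _).mpr ⟨C, hC, fun i hi => by rw [hCR i hi]⟩

theorem apply_eq_of_supporters_subset (hf : IsMWCRule 𝒞 f) {R R' : N → Bool} {x : Bool}
    (hsub : ∀ i, R' i = x → R i = x) (hR' : f R' = x) : f R = x := by
  obtain ⟨C, hC, hCR'⟩ := (hf R' x).mp hR'
  exact (hf R x).mpr ⟨C, hC, fun i hi => hsub i (hCR' i hi)⟩

theorem strategyProof [DecidableEq N] (hf : IsMWCRule 𝒞 f) : StrategyProof f := by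
  intro R i b hb
  refine hf.apply_eq_of_supporters_subset (fun j hj => ?_) hb
  rcases eq_or_ne j i with rfl | hji
  · rfl
  · rwa [Function.update_of_ne hji] at hj

end IsMWCRule

theorem stmt2_general {N : Type*} [DecidableEq N] (𝒞 : Set (Finset N))
    (f : (N → Bool) → Bool) (hf : IsMWCRule 𝒞 f) :
    Neutral f ∧ StrategyProof f :=
  ⟨hf.neutral, hf.strategyProof⟩

/-- Forward direction of Moulin's theorem: the M-winning coalition rule associated with an
M-winning coalition set is neutral and strategy-proof. -/
theorem stmt2 {N : Type*} [Fintype N] [DecidableEq N] (𝒞 : Set (Finset N))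
    (h𝒞 : IsMWCS 𝒞) (f : (N → Bool) → Bool) (hf : IsMWCRule 𝒞 f) :
    Neutral f ∧ StrategyProof f :=
  stmt2_general 𝒞 f hf
end

section
/- (Converse direction of Moulin's theorem.) Let N be a finite set of voters and let f be a strategy-proof and neutral rule. Then there exists an M-winning coalition set 𝒞 on N such that f is the M-winning coalition rule associated with 𝒞, i.e., for every profile R and every x : Bool, f R = x if and only if some C ∈ 𝒞 satisfies R i = x for all i ∈ C. -/
section SelfDualUpperSet

variable {α : Type*} {W : Set (Finset α)}

theorem exists_minimal_subset_iff_mem (hW : IsUpperSet W) (C : Finset α) :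
    (∃ C' ∈ {C' | Minimal (· ∈ W) C'}, C' ⊆ C) ↔ C ∈ W :=
  ⟨fun ⟨_, hC', hsub⟩ => hW hsub hC'.prop,
    fun hC => (exists_minimal_le_of_wellFoundedLT _ C hC).imp fun _ h => ⟨h.2, h.1⟩⟩

theorem isMWCS_setOf_minimal [Fintype α] [DecidableEq α] (hW : IsUpperSet W)
    (hdual : ∀ C, Cᶜ ∈ W ↔ C ∉ W) :
    IsMWCS {C | Minimal (· ∈ W) C} := by
  have huniv : Finset.univ ∈ W := by
    by_contra h
    exact h (hW (Finset.subset_univ _) ((hdual _).2 h))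
  have hempty : ∅ ∉ W := fun h => (hdual Finset.univ).1 (by simpa using h) huniv
  refine ⟨?_, ?_, ?_, fun C => ?_⟩
  · obtain ⟨C, hC, -⟩ := (exists_minimal_subset_iff_mem hW _).2 huniv
    exact ⟨C, hC⟩
  · intro C hC
    exact Finset.nonempty_iff_ne_empty.2 fun h => hempty (h ▸ hC.prop)
  · intro C hC C' hC' hsub
    exact le_antisymm hsub (hC'.2 hC.prop hsub)
  · rw [exists_minimal_subset_iff_mem hW, ← not_iff_not, ← hdual,
      ← exists_minimal_subset_iff_mem hW]
    simp [Finset.subset_compl_iff_disjoint_left, ← Finset.not_disjoint_iff_nonempty_inter]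

end SelfDualUpperSet

section StrategyProofNeutral

variable {N : Type*} [DecidableEq N] {f : (N → Bool) → Bool}

theorem StrategyProof.apply_le_apply_update (hSP : StrategyProof f) (R : N → Bool) (i : N)
    {b : Bool} (hb : R i ≤ b) : f R ≤ f (Function.update R i b) := by
  cases b with
  | false => rw [Function.update_eq_self_iff.2 (le_bot_iff.1 hb).symm]
  | true =>
    -- at `update R i true`, voter `i` could reach `R` by misreporting `R i`
    have h := hSP (Function.update R i true) i (R i)
    rw [Function.update_idem, Function.update_eq_self, Function.update_self] at h
    cases hR : f R
    · exact bot_le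
    · exact (h hR).ge

theorem StrategyProof.monotone [Fintype N] (hSP : StrategyProof f) : Monotone f := by
  intro R R' hRR'
  suffices ∀ s : Finset N, f R ≤ f (s.piecewise R' R) by
    simpa using this Finset.univ
  intro s
  induction s using Finset.induction_on with
  | empty => simp
  | insert j s _ ih =>
    rw [Finset.piecewise_insert]
    exact ih.trans (hSP.apply_le_apply_update _ j
      (s.piecewise_le_of_le_of_le le_rfl hRR' j))

def winningCoalitions (f : (N → Bool) → Bool) : Set (Finset N) :=
  {C | f (fun i => decide (i ∈ C)) = true}

theorem isUpperSet_winningCoalitions (hf : Monotone f) : IsUpperSet (winningCoalitions f) :=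
  fun _ _ hsub hC => top_le_iff.1 <|
    hC.symm.trans_le (hf fun i => Bool.le_iff_imp.2 (by simpa using @hsub i))

theorem Neutral.compl_mem_winningCoalitions_iff [Fintype N] (hN : Neutral f) (C : Finset N) :
    Cᶜ ∈ winningCoalitions f ↔ C ∉ winningCoalitions f := by
  simpa [winningCoalitions] using congrArg (· = true) (hN fun i => decide (i ∈ C))

theorem Neutral.apply_eq_iff_mem_winningCoalitions [Fintype N] (hN : Neutral f)
    (R : N → Bool) (x : Bool) :
    f R = x ↔ Finset.univ.filter (fun i => R i = x) ∈ winningCoalitions f := by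
  cases x <;> simp [winningCoalitions, hN R]

end StrategyProofNeutral

/-- Converse direction of Moulin's theorem: every strategy-proof and neutral rule is the
M-winning coalition rule associated with some M-winning coalition set. -/
theorem stmt3 {N : Type*} [Fintype N] [DecidableEq N] (f : (N → Bool) → Bool)
    (hSP : StrategyProof f) (hN : Neutral f) :
    ∃ 𝒞 : Set (Finset N), IsMWCS 𝒞 ∧ IsMWCRule 𝒞 f := by
  have hup := isUpperSet_winningCoalitions hSP.monotone
  refine ⟨_, isMWCS_setOf_minimal hup hN.compl_mem_winningCoalitions_iff, fun R x => ?_⟩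
  rw [hN.apply_eq_iff_mem_winningCoalitions, ← exists_minimal_subset_iff_mem hup]
  simp [Finset.subset_iff]
end

section
/- (Proposition 1.) Let N be a finite set of voters and let 𝒮 be the sequential unanimity rule associated with a sequence S = (S_1,…,S_K) of nonempty, pairwise distinct subsets of N with S_K a singleton. Then 𝒮 is neutral and strategy-proof. -/
/-!
Both properties follow from the description of `g R` as the common preference of the first
coalition in the sequence that `R` does not split. Flipping all preferences preserves which
coalitions are split, which gives neutrality. For strategy-proofness, suppose voter `i` obtains
his favourite `x` by misreporting. The coalition `S k` deciding for `x` under the misreport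
does not contain `i`, so it still agrees on `x` under `R`; and an earlier coalition that the
misreport splits but `R` does not must contain `i`, so under `R` it agrees on `R i = x` too.
Either way the first coalition not split by `R` agrees on `x`.
-/

def Splits {N : Type*} (R : N → Bool) (C : Finset N) : Prop :=
  ∃ i ∈ C, ∃ j ∈ C, R i ≠ R j

section Splits

variable {N : Type*} {R R' : N → Bool} {C : Finset N}

theorem splits_congr (h : ∀ i ∈ C, R i = R' i) : Splits R C ↔ Splits R' C := by
  constructor <;> rintro ⟨i, hi, j, hj, hij⟩
  · exact ⟨i, hi, j, hj, by rwa [← h i hi, ← h j hj]⟩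
  · exact ⟨i, hi, j, hj, by rwa [h i hi, h j hj]⟩

theorem splits_not : Splits (fun i => !(R i)) C ↔ Splits R C := by
  simp only [Splits, ne_eq, Bool.not_inj_iff]

theorem eq_of_not_splits (h : ¬Splits R C) {i j : N} (hi : i ∈ C) (hj : j ∈ C) : R j = R i := by
  by_contra hji
  exact h ⟨j, hj, i, hi, hji⟩

end Splits

namespace IsSURule

variable {N : Type*} {K : ℕ} {S : Fin K → Finset N} {g : (N → Bool) → Bool}

theorem apply_eq_of_forall_lt (hg : IsSURule S g) {R : N → Bool} {x : Bool} (k : Fin K)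
    (hk : ∀ i ∈ S k, R i = x) (hlt : ∀ l < k, Splits R (S l) ∨ ∀ i ∈ S l, R i = x) :
    g R = x := by
  induction k using WellFoundedLT.induction with
  | _ k ih =>
    by_cases hsplit : ∀ l < k, Splits R (S l)
    · exact (hg R x).mpr ⟨k, hk, hsplit⟩
    · push Not at hsplit
      obtain ⟨l, hlk, hl⟩ := hsplit
      exact ih l hlk ((hlt l hlk).resolve_left hl) fun m hml => hlt m (hml.trans hlk)

theorem neutral (hg : IsSURule S g) : Neutral g := by
  intro R
  obtain ⟨k, hk, hlt⟩ := (hg R (g R)).mp rfl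
  refine (hg _ _).mpr ⟨k, fun i hi => by rw [hk i hi], fun l hl => ?_⟩
  exact splits_not.mpr (hlt l hl)

theorem strategyProof [DecidableEq N] (hg : IsSURule S g) : StrategyProof g := by
  intro R i b hb
  by_cases hbi : b = R i
  · rwa [hbi, Function.update_eq_self] at hb
  set R' := Function.update R i b
  obtain ⟨k, hk, hlt⟩ := (hg R' (R i)).mp hb
  have hagree : ∀ C : Finset N, i ∉ C → ∀ j ∈ C, R' j = R j := fun C hiC j hj =>
    Function.update_of_ne (ne_of_mem_of_not_mem hj hiC) _ _
  have hik : i ∉ S k := fun hi => hbi (by simpa [R'] using hk i hi)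
  refine hg.apply_eq_of_forall_lt k (fun j hj => (hagree _ hik j hj).symm.trans (hk j hj)) ?_
  intro l hl
  by_cases hil : i ∈ S l
  · by_cases hsplit : Splits R (S l)
    · exact .inl hsplit
    · exact .inr fun j hj => eq_of_not_splits hsplit hil hj
  · exact .inl ((splits_congr (hagree _ hil)).mp (hlt l hl))

end IsSURule

theorem stmt5_general {N : Type*} [DecidableEq N] {K : ℕ}
    (S : Fin (K + 1) → Finset N)
    (g : (N → Bool) → Bool) (hg : IsSURule S g) :
    Neutral g ∧ StrategyProof g :=
  ⟨hg.neutral, hg.strategyProof⟩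

/-- Proposition 1: sequential unanimity rules are neutral and strategy-proof. -/
theorem stmt5 {N : Type*} [Fintype N] [DecidableEq N] {K : ℕ}
    (S : Fin (K + 1) → Finset N) (hne : ∀ k, (S k).Nonempty)
    (hinj : Function.Injective S) (hlast : (S (Fin.last K)).card = 1)
    (g : (N → Bool) → Bool) (hg : IsSURule S g) :
    Neutral g ∧ StrategyProof g :=
  stmt5_general S g hg
end

section
/- (Theorem 2, invariant form.) Let N be a finite set of voters, 𝒞 an M-winning coalition set on N, and S = (S_1,…,S_K) a sequence of nonempty, pairwise distinct subsets of N with S_K a singleton, such that for every C ∈ 𝒞 there exists k ∈ {1,…,K} with S_k ⊆ C and S_l ∩ C ≠ ∅ for all l < k (every sequence produced by Algorithm 1 from 𝒞 has this property). Then for every profile R : N → Bool, the sequential unanimity rule associated with S and the M-winning coalition rule associated with 𝒞 give the same outcome. -/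
/-!
Let `C ∈ 𝒞` be a coalition unanimous for `f R`, and `S k₀ ⊆ C` the term given by the invariant.
The sequential unanimity rule stops at the first unanimous term `S k`. It cannot pass `k₀`,
since `S k₀ ⊆ C` is unanimous; and `S k` meets `C` (for `k < k₀` by the invariant, for `k = k₀`
because `S k₀` is nonempty), so the unanimous value of `S k` is that of `C`, namely `f R`.
-/

theorem IsSURule.apply_eq_of_unanimous_coalition {N : Type*} [DecidableEq N] {K : ℕ}
    {S : Fin K → Finset N} {g : (N → Bool) → Bool} (hg : IsSURule S g)
    {R : N → Bool} {x : Bool} {C : Finset N} (hC : ∀ i ∈ C, R i = x)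
    {k₀ : Fin K} (hne : (S k₀).Nonempty) (hsub : S k₀ ⊆ C)
    (hmeet : ∀ l < k₀, (S l ∩ C).Nonempty) : g R = x := by
  obtain ⟨k, hk, hbefore⟩ := (hg R (g R)).mp rfl
  rcases lt_or_ge k₀ k with hlt | hle
  · obtain ⟨i, hi, j, hj, hij⟩ := hbefore k₀ hlt
    exact absurd ((hC i (hsub hi)).trans (hC j (hsub hj)).symm) hij
  · obtain ⟨i, hiS, hiC⟩ : ∃ i ∈ S k, i ∈ C := by
      rcases hle.lt_or_eq with hlt | rfl
      · obtain ⟨i, hi⟩ := hmeet k hlt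
        exact ⟨i, Finset.mem_inter.mp hi⟩
      · obtain ⟨i, hi⟩ := hne
        exact ⟨i, hi, hsub hi⟩
    exact (hk i hiS).symm.trans (hC i hiC)

theorem stmt6_general {N : Type*} [DecidableEq N] {K : ℕ}
    (𝒞 : Set (Finset N))
    (S : Fin (K + 1) → Finset N) (hne : ∀ k, (S k).Nonempty)
    (hinv : ∀ C ∈ 𝒞, ∃ k : Fin (K + 1), S k ⊆ C ∧ ∀ l < k, (S l ∩ C).Nonempty)
    (f g : (N → Bool) → Bool) (hf : IsMWCRule 𝒞 f) (hg : IsSURule S g)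
    (R : N → Bool) : g R = f R := by
  obtain ⟨C, hC𝒞, hC⟩ := (hf R (f R)).mp rfl
  obtain ⟨k₀, hsub, hmeet⟩ := hinv C hC𝒞
  exact hg.apply_eq_of_unanimous_coalition hC (hne k₀) hsub hmeet

/-- Theorem 2 (invariant form): if for every winning coalition C there is a term of the
sequence contained in C all of whose predecessors meet C, then the sequential unanimity
rule and the M-winning coalition rule coincide at every profile. -/
theorem stmt6 {N : Type*} [Fintype N] [DecidableEq N] {K : ℕ}
    (𝒞 : Set (Finset N)) (h𝒞 : IsMWCS 𝒞)
    (S : Fin (K + 1) → Finset N) (hne : ∀ k, (S k).Nonempty)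
    (hinj : Function.Injective S) (hlast : (S (Fin.last K)).card = 1)
    (hinv : ∀ C ∈ 𝒞, ∃ k : Fin (K + 1), S k ⊆ C ∧ ∀ l < k, (S l ∩ C).Nonempty)
    (f g : (N → Bool) → Bool) (hf : IsMWCRule 𝒞 f) (hg : IsSURule S g)
    (R : N → Bool) : g R = f R :=
  stmt6_general 𝒞 S hne hinv f g hf hg R
end

section
/- (Corollary 1.) Let N be a finite set of voters. A rule f : (N → Bool) → Bool is strategy-proof and neutral if and only if f is a sequential unanimity rule, i.e., there exists a sequence S = (S_1,…,S_K) of nonempty, pairwise distinct subsets of N with S_K a singleton such that f is the sequential unanimity rule associated with S. -/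
section Aux
variable {N : Type*} [Fintype N] [DecidableEq N] {f : (N → Bool) → Bool}

lemma mono1 (hSP : StrategyProof f) (R : N → Bool) (i : N) :
    f (Function.update R i (f R)) = f R := by
  by_cases h : R i = f R
  · rw [← h, Function.update_eq_self]
    exact h.symm
  · by_contra hne
    have h1 : f (Function.update R i (f R)) = R i := by
      cases hb : f R <;> cases hr : R i <;> simp_all
    have := hSP R i (f R) h1
    exact h (this.symm)

lemma monoA (hSP : StrategyProof f) (A : Finset N) (R : N → Bool) {x : Bool}
    (h : f R = x) : f (fun i => if i ∈ A then x else R i) = x := by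
  induction A using Finset.induction_on with
  | empty => simpa using h
  | @insert a A ha ih =>
    have he : (fun i => if i ∈ insert a A then x else R i)
        = Function.update (fun i => if i ∈ A then x else R i) a x := by
      funext i
      by_cases hi : i = a
      · subst hi; simp
      · simp [Function.update, hi, Finset.mem_insert, hi]
    have h2 := mono1 hSP (fun i => if i ∈ A then x else R i) a
    rw [ih] at h2
    rw [he]; exact h2

end Aux

section Coal
set_option linter.unusedSectionVars false
variable {N : Type*} [Fintype N] [DecidableEq N] {f : (N → Bool) → Bool}

def chi (C : Finset N) : N → Bool := fun i => decide (i ∈ C)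

def WinF (f : (N → Bool) → Bool) [Fintype N] [DecidableEq N] : Finset (Finset N) :=
  Finset.univ.filter (fun C => f (chi C) = true)

lemma mem_WinF {C : Finset N} : C ∈ WinF f ↔ f (chi C) = true := by
  simp [WinF]

lemma chi_filter_true (R : N → Bool) :
    chi (Finset.univ.filter (fun i => R i = true)) = R := by
  funext i; simp [chi]

lemma all_true (hSP : StrategyProof f) (hNe : Neutral f) : f (fun _ => true) = true := by
  by_contra ht
  have ht' : f (fun _ => true) = false := by simpa using ht
  have hb : f (fun _ : N => false) = true := by
    have := hNe (fun _ => true)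
    simp [ht'] at this
    simpa using this
  have := monoA hSP Finset.univ (fun _ : N => false) hb
  simp at this
  rw [this] at ht'
  exact absurd ht' (by simp)

lemma empty_not_win (hSP : StrategyProof f) (hNe : Neutral f) : ∅ ∉ WinF f := by
  rw [mem_WinF]
  have : chi (∅ : Finset N) = fun _ => false := by funext i; simp [chi]
  rw [this]
  have h1 := hNe (fun _ : N => true)
  rw [all_true hSP hNe] at h1
  intro h2
  simp at h1
  rw [h2] at h1
  simp at h1

lemma WinF_up (hSP : StrategyProof f) {C C' : Finset N} (hsub : C ⊆ C')
    (hC : C ∈ WinF f) : C' ∈ WinF f := by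
  rw [mem_WinF] at hC ⊢
  have he : chi C' = fun i => if i ∈ C' then true else chi C i := by
    funext i
    by_cases hi : i ∈ C'
    · simp [chi, hi]
    · have hic : i ∉ C := fun h => hi (hsub h)
      simp [chi, hi, hic]
  rw [he]
  exact monoA hSP C' (chi C) hC

lemma WinF_compl (hNe : Neutral f) {C : Finset N} (hC : C ∈ WinF f) : Cᶜ ∉ WinF f := by
  rw [mem_WinF] at hC ⊢
  have : chi (Cᶜ) = fun i => !(chi C i) := by
    funext i; simp [chi]
  rw [this, hNe, hC]
  simp

lemma WinF_inter (hSP : StrategyProof f) (hNe : Neutral f) {C D : Finset N}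
    (hC : C ∈ WinF f) (hD : D ∈ WinF f) : (C ∩ D).Nonempty := by
  rw [Finset.nonempty_iff_ne_empty]
  intro h
  have hsub : D ⊆ Cᶜ := by
    intro i hi
    simp only [Finset.mem_compl]
    intro hic
    have : i ∈ C ∩ D := Finset.mem_inter.mpr ⟨hic, hi⟩
    simp [h] at this
  exact WinF_compl hNe hC (WinF_up hSP hsub hD)

lemma f_eq_iff (hSP : StrategyProof f) (hNe : Neutral f) (R : N → Bool) (x : Bool) :
    f R = x ↔ Finset.univ.filter (fun i => R i = x) ∈ WinF f := by
  cases x with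
  | true => rw [mem_WinF, chi_filter_true]
  | false =>
    have h1 : f R = false ↔ f (fun i => !(R i)) = true := by
      rw [hNe]; simp
    rw [h1, mem_WinF]
    have : chi (Finset.univ.filter (fun i => R i = false))
        = fun i => !(R i) := by
      funext i; simp [chi]
    rw [this]

end Coal

section Min
set_option linter.unusedSectionVars false
variable {N : Type*} [Fintype N] [DecidableEq N] {f : (N → Bool) → Bool}

def MinF (f : (N → Bool) → Bool) [Fintype N] [DecidableEq N] : Finset (Finset N) :=
  (WinF f).filter (fun C => ∀ D ∈ WinF f, D ⊆ C → D = C)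

lemma exists_minF (hC : C ∈ WinF f) : ∃ D ∈ MinF f, D ⊆ C := by
  classical
  have hne : ((WinF f).filter (fun E => E ⊆ C)).Nonempty :=
    ⟨C, Finset.mem_filter.mpr ⟨hC, le_refl _⟩⟩
  obtain ⟨D, hD, hmin⟩ := Finset.exists_min_image _ Finset.card hne
  rw [Finset.mem_filter] at hD
  refine ⟨D, Finset.mem_filter.mpr ⟨hD.1, ?_⟩, hD.2⟩
  intro E hE hED
  have hEC : E ⊆ C := hED.trans hD.2
  have := hmin E (Finset.mem_filter.mpr ⟨hE, hEC⟩)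
  exact Finset.eq_of_subset_of_card_le hED this

lemma minF_nonempty (hSP : StrategyProof f) (hNe : Neutral f) {C : Finset N}
    (hC : C ∈ MinF f) : C.Nonempty := by
  rw [Finset.nonempty_iff_ne_empty]
  rintro rfl
  exact empty_not_win hSP hNe ((Finset.mem_filter.mp hC).1)

lemma MinF_ne (hSP : StrategyProof f) (hNe : Neutral f) : (MinF f (N := N)).Nonempty := by
  have huniv : (Finset.univ : Finset N) ∈ WinF f := by
    rw [mem_WinF]
    have : chi (Finset.univ : Finset N) = fun _ => true := by funext i; simp [chi]
    rw [this]; exact all_true hSP hNe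
  obtain ⟨D, hD, _⟩ := exists_minF huniv
  exact ⟨D, hD⟩

lemma unan_val (hSP : StrategyProof f) (hNe : Neutral f) {C : Finset N} (hC : C ∈ MinF f)
    {R : N → Bool} {v : Bool} (h : ∀ i ∈ C, R i = v) : f R = v := by
  have hCW : C ∈ WinF f := (Finset.mem_filter.mp hC).1
  by_contra hne
  have hfr : f R = !v := by cases hv : f R <;> cases v <;> simp_all
  have hW : Finset.univ.filter (fun i => R i = !v) ∈ WinF f :=
    (f_eq_iff hSP hNe R (!v)).mp hfr
  obtain ⟨i, hi⟩ := WinF_inter hSP hNe hCW hW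
  rw [Finset.mem_inter, Finset.mem_filter] at hi
  have := h i hi.1
  rw [this] at hi
  simp at hi

lemma exists_unan (hSP : StrategyProof f) (hNe : Neutral f) (R : N → Bool) :
    ∃ C ∈ MinF f, ∀ i ∈ C, R i = f R := by
  have hW : Finset.univ.filter (fun i => R i = f R) ∈ WinF f :=
    (f_eq_iff hSP hNe R (f R)).mp rfl
  obtain ⟨D, hD, hsub⟩ := exists_minF hW
  exact ⟨D, hD, fun i hi => (Finset.mem_filter.mp (hsub hi)).2⟩

end Min

/-- Corollary 1: a rule is strategy-proof and neutral iff it is a sequential unanimity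
rule. -/
theorem stmt8 {N : Type*} [Fintype N] [DecidableEq N] (f : (N → Bool) → Bool) :
    (StrategyProof f ∧ Neutral f) ↔
      ∃ (K : ℕ) (S : Fin (K + 1) → Finset N), (∀ k, (S k).Nonempty) ∧
        Function.Injective S ∧ (S (Fin.last K)).card = 1 ∧ IsSURule S f := by
  constructor
  · rintro ⟨hSP, hNe⟩
    obtain ⟨C₀, hC₀⟩ := MinF_ne hSP hNe
    obtain ⟨i₀, -⟩ := minF_nonempty hSP hNe hC₀
    set M : Finset (Finset N) := (MinF f).erase {i₀} with hM
    set m := M.card with hm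
    set S : Fin (m+1) → Finset N :=
      fun k => if h : (k : ℕ) < m then M.toList.get ⟨k, by rw [Finset.length_toList]; exact h⟩
        else {i₀} with hS
    have hSlt : ∀ (k : Fin (m+1)) (h : (k : ℕ) < m), S k ∈ M := by
      intro k h
      simp only [hS]
      rw [dif_pos h]
      exact Finset.mem_toList.mp (List.get_mem _ _)
    have hSnm : ∀ (k : Fin (m+1)), ¬((k : ℕ) < m) → S k = {i₀} := by
      intro k h
      simp only [hS]
      rw [dif_neg h]
    have hmem : ∀ C ∈ M, ∃ k : Fin (m+1), (k : ℕ) < m ∧ S k = C := by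
      intro C hC
      rw [← Finset.mem_toList] at hC
      obtain ⟨n, hn⟩ := List.mem_iff_get.mp hC
      have hn' : (n : ℕ) < m := by rw [hm, ← Finset.length_toList M]; exact n.isLt
      refine ⟨⟨(n : ℕ), Nat.lt_succ_of_lt hn'⟩, hn', ?_⟩
      simp only [hS]
      rw [dif_pos hn']
      rw [← hn]
    have hSMinF : ∀ (k : Fin (m+1)), (k : ℕ) < m → S k ∈ MinF f := by
      intro k h
      exact Finset.mem_of_mem_erase (hSlt k h)
    refine ⟨m, S, ?_, ?_, ?_, ?_⟩
    · intro k
      by_cases h : (k : ℕ) < m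
      · exact minF_nonempty hSP hNe (hSMinF k h)
      · rw [hSnm k h]; exact Finset.singleton_nonempty _
    · intro a b hab
      by_cases ha : (a : ℕ) < m <;> by_cases hb : (b : ℕ) < m
      · simp only [hS] at hab
        rw [dif_pos ha, dif_pos hb] at hab
        have hnd := Finset.nodup_toList M
        have := (List.Nodup.get_inj_iff hnd).mp hab
        have hv : (a : ℕ) = (b : ℕ) := by injection this
        exact Fin.ext hv
      · exfalso
        have h1 := hSlt a ha
        rw [hab, hSnm b hb] at h1
        exact Finset.notMem_erase _ _ h1
      · exfalso
        have h1 := hSlt b hb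
        rw [← hab, hSnm a ha] at h1
        exact Finset.notMem_erase _ _ h1
      · have ha' : (a : ℕ) = m := Nat.eq_of_lt_succ_of_not_lt a.isLt ha
        have hb' : (b : ℕ) = m := Nat.eq_of_lt_succ_of_not_lt b.isLt hb
        exact Fin.ext (ha'.trans hb'.symm)
    · rw [hSnm (Fin.last m) (by simp)]
      exact Finset.card_singleton _
    · intro R x
      constructor
      · intro hfx
        obtain ⟨C, hC, hCu⟩ := exists_unan hSP hNe R
        rw [hfx] at hCu
        set U := Finset.univ.filter
          (fun k : Fin (m+1) => ∀ a ∈ S k, ∀ b ∈ S k, R a = R b) with hU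
        have hlastmem : Fin.last m ∈ U := by
          refine Finset.mem_filter.mpr ⟨Finset.mem_univ _, ?_⟩
          intro a ha b hb
          rw [hSnm (Fin.last m) (by simp), Finset.mem_singleton] at ha hb
          rw [ha, hb]
        have hUne : U.Nonempty := ⟨_, hlastmem⟩
        set k' := U.min' hUne with hk'
        have hk'U : k' ∈ U := U.min'_mem hUne
        have hk'le : ∀ l ∈ U, k' ≤ l := fun l hl => U.min'_le l hl
        have hint : ∀ a ∈ S k', ∀ b ∈ S k', R a = R b := by
          have := (Finset.mem_filter.mp hk'U).2
          exact this
        have hkC : ∃ kc : Fin (m+1), kc ∈ U ∧ S kc = C := by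
          by_cases hCi : C = {i₀}
          · refine ⟨Fin.last m, hlastmem, ?_⟩
            rw [hSnm (Fin.last m) (by simp), hCi]
          · obtain ⟨kc, hkc, hkcS⟩ := hmem C (Finset.mem_erase.mpr ⟨by simpa using hCi, hC⟩)
            refine ⟨kc, ?_, hkcS⟩
            refine Finset.mem_filter.mpr ⟨Finset.mem_univ _, ?_⟩
            intro a ha b hb
            rw [hkcS] at ha hb
            rw [hCu a ha, hCu b hb]
        refine ⟨k', ?_, ?_⟩
        · by_cases hk'm : (k' : ℕ) < m
          · have hSk' := hSMinF k' hk'm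
            obtain ⟨i₁, hi₁⟩ := minF_nonempty hSP hNe hSk'
            have hall : ∀ i ∈ S k', R i = R i₁ := fun i hi => hint i hi i₁ hi₁
            have := unan_val hSP hNe hSk' hall
            rw [hfx] at this
            intro i hi
            rw [hall i hi, ← this]
          · obtain ⟨kc, hkcU, hkcS⟩ := hkC
            have h1 : k' ≤ kc := hk'le kc hkcU
            have h2 : (kc : ℕ) ≤ m := Nat.lt_succ_iff.mp kc.isLt
            have hk'm' : (k' : ℕ) = m := Nat.eq_of_lt_succ_of_not_lt k'.isLt hk'm
            have : kc = k' := by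
              have h1' : (k' : ℕ) ≤ (kc : ℕ) := Fin.le_def.mp h1
              apply Fin.ext
              omega
            rw [this] at hkcS
            intro i hi
            exact hCu i (hkcS ▸ hi)
        · intro l hl
          have hlU : l ∉ U := fun hh => absurd (hk'le l hh) (not_le.mpr hl)
          simp only [hU, Finset.mem_filter, Finset.mem_univ, true_and] at hlU
          push_neg at hlU
          exact hlU
      · rintro ⟨k, hk1, hk2⟩
        by_cases hkm : (k : ℕ) < m
        · exact unan_val hSP hNe (hSMinF k hkm) hk1
        · rw [hSnm k hkm] at hk1
          by_cases hi0 : ({i₀} : Finset N) ∈ MinF f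
          · exact unan_val hSP hNe hi0 hk1
          · exfalso
            have hMeq : M = MinF f := Finset.erase_eq_of_notMem hi0
            obtain ⟨C, hC, hCu⟩ := exists_unan hSP hNe R
            rw [← hMeq] at hC
            obtain ⟨l, hlm, hlS⟩ := hmem C hC
            have hlk : l < k := by
              have hk' : (k : ℕ) = m := Nat.eq_of_lt_succ_of_not_lt k.isLt hkm
              exact Fin.lt_def.mpr (by omega)
            obtain ⟨a, ha, b, hb, hne'⟩ := hk2 l hlk
            rw [hlS] at ha hb
            exact hne' ((hCu a ha).trans (hCu b hb).symm)
  · rintro ⟨K, S, hne, hinj, hcard, hSU⟩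
    obtain ⟨j₀, hj₀⟩ := Finset.card_eq_one.mp hcard
    have hlastU : ∀ (R : N → Bool), ∀ i ∈ S (Fin.last K), ∀ j ∈ S (Fin.last K), R i = R j := by
      intro R i hi j hj
      rw [hj₀, Finset.mem_singleton] at hi hj
      rw [hi, hj]
    constructor
    · intro R i b h
      obtain ⟨k, hk1, hk2⟩ := (hSU (Function.update R i b) (R i)).mp h
      have hkx : ∀ j ∈ S k, R j = R i := by
        intro j hj
        by_cases hji : j = i
        · rw [hji]
        · have := hk1 j hj
          rwa [Function.update_of_ne hji] at this
      set U := Finset.univ.filter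
        (fun l : Fin (K+1) => ∀ a ∈ S l, ∀ c ∈ S l, R a = R c) with hU
      have hUne : U.Nonempty :=
        ⟨Fin.last K, Finset.mem_filter.mpr ⟨Finset.mem_univ _, hlastU R⟩⟩
      set k' := U.min' hUne with hk'
      have hk'U : k' ∈ U := U.min'_mem hUne
      have hk'le : ∀ l ∈ U, k' ≤ l := fun l hl => U.min'_le l hl
      have hkU : k ∈ U := Finset.mem_filter.mpr
        ⟨Finset.mem_univ _, fun a ha c hc => by rw [hkx a ha, hkx c hc]⟩
      have hk'k : k' ≤ k := hk'le k hkU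
      have hint : ∀ a ∈ S k', ∀ c ∈ S k', R a = R c := (Finset.mem_filter.mp hk'U).2
      apply (hSU R (R i)).mpr
      refine ⟨k', ?_, ?_⟩
      · rcases eq_or_lt_of_le hk'k with heq | hlt
        · intro a ha
          exact hkx a (heq ▸ ha)
        · by_cases hik' : i ∈ S k'
          · intro a ha
            exact hint a ha i hik'
          · exfalso
            obtain ⟨a, ha, c, hc, hne'⟩ := hk2 k' hlt
            apply hne'
            rw [Function.update_of_ne (fun hh => hik' (by rw [← hh]; exact ha)),
              Function.update_of_ne (fun hh => hik' (by rw [← hh]; exact hc))]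
            exact hint a ha c hc
      · intro l hl
        have hlU : l ∉ U := fun hh => absurd (hk'le l hh) (not_le.mpr hl)
        simp only [hU, Finset.mem_filter, Finset.mem_univ, true_and] at hlU
        push_neg at hlU
        exact hlU
    · intro R
      obtain ⟨k, hk1, hk2⟩ := (hSU R (f R)).mp rfl
      apply (hSU (fun i => !(R i)) (!(f R))).mpr
      refine ⟨k, fun i hi => by rw [hk1 i hi], fun l hl => ?_⟩
      obtain ⟨a, ha, c, hc, hne'⟩ := hk2 l hl
      exact ⟨a, ha, c, hc, by simpa using hne'⟩
end

section
/- (Uniqueness of the M-winning coalition representation; key step of Corollary 2.) Let N be a finite set of voters and let 𝒞 and 𝒞' be M-winning coalition sets on N whose associated M-winning coalition rules agree at every profile R : N → Bool. Then 𝒞 = 𝒞'. In particular, a neutral and strategy-proof rule is represented by a unique M-winning coalition set. -/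
/-! A coalition `C` of `𝒞` is exactly the set of voters for `true` at the profile
`fun i => decide (i ∈ C)`, so the common rule forces some coalition of `𝒞'` inside `C`,
and symmetrically. Since both families are antichains (P1), this mutual refinement makes them
equal. -/

lemma IsMWCRule.exists_subset_of_mem {N : Type*} [DecidableEq N] {𝒞 𝒞' : Set (Finset N)}
    {f : (N → Bool) → Bool} (hf : IsMWCRule 𝒞 f) (hf' : IsMWCRule 𝒞' f)
    {C : Finset N} (hC : C ∈ 𝒞) : ∃ C' ∈ 𝒞', C' ⊆ C := by
  let R : N → Bool := fun i => decide (i ∈ C)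
  have hR : f R = true := (hf R true).mpr ⟨C, hC, fun i hi => by simp [R, hi]⟩
  obtain ⟨C', hC', hall⟩ := (hf' R true).mp hR
  exact ⟨C', hC', fun i hi => by simpa [R] using hall i hi⟩

lemma subset_of_forall_exists_subset {α : Type*} {𝒞 𝒞' : Set (Finset α)}
    (hmin : ∀ C ∈ 𝒞, ∀ C' ∈ 𝒞, C ⊆ C' → C = C')
    (h : ∀ C ∈ 𝒞, ∃ D ∈ 𝒞', D ⊆ C) (h' : ∀ D ∈ 𝒞', ∃ C ∈ 𝒞, C ⊆ D) : 𝒞 ⊆ 𝒞' := by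
  intro C hC
  obtain ⟨D, hD, hDC⟩ := h C hC
  obtain ⟨C₀, hC₀, hC₀D⟩ := h' D hD
  obtain rfl : C₀ = C := hmin C₀ hC₀ C hC (hC₀D.trans hDC)
  obtain rfl : D = C₀ := hDC.antisymm hC₀D
  exact hD

theorem stmt9_general {N : Type*} [DecidableEq N] (𝒞 𝒞' : Set (Finset N))
    (h𝒞 : IsMWCS 𝒞) (h𝒞' : IsMWCS 𝒞') (f f' : (N → Bool) → Bool)
    (hf : IsMWCRule 𝒞 f) (hf' : IsMWCRule 𝒞' f') (hagree : ∀ R, f R = f' R) :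
    𝒞 = 𝒞' := by
  obtain rfl : f = f' := funext hagree
  have h : ∀ C ∈ 𝒞, ∃ D ∈ 𝒞', D ⊆ C := fun _ => hf.exists_subset_of_mem hf'
  have h' : ∀ D ∈ 𝒞', ∃ C ∈ 𝒞, C ⊆ D := fun _ => hf'.exists_subset_of_mem hf
  exact (subset_of_forall_exists_subset h𝒞.2.2.1 h h').antisymm
    (subset_of_forall_exists_subset h𝒞'.2.2.1 h' h)

/-- Uniqueness of the M-winning coalition representation: two M-winning coalition sets
whose associated rules agree at every profile are equal. -/
theorem stmt9 {N : Type*} [Fintype N] [DecidableEq N] (𝒞 𝒞' : Set (Finset N))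
    (h𝒞 : IsMWCS 𝒞) (h𝒞' : IsMWCS 𝒞') (f f' : (N → Bool) → Bool)
    (hf : IsMWCRule 𝒞 f) (hf' : IsMWCRule 𝒞' f') (hagree : ∀ R, f R = f' R) :
    𝒞 = 𝒞' :=
  stmt9_general 𝒞 𝒞' h𝒞 h𝒞' f f' hf hf' hagree
end

section
/- (Proposition 2, essentiality criterion.) Let N be a finite set of voters and S = (S_1,…,S_K), with K ≥ 2, a sequence of nonempty, pairwise distinct subsets of N with S_K a singleton. Suppose that for every k ∈ {1,…,K−1} there exists a subset C ⊆ N such that: S_k ⊆ C; for every l < k, S_l ∩ C ≠ ∅ and S_l is not a subset of C; and for every l with k < l ≤ K, S_l is not a subset of C. (Outputs of Algorithm 1 satisfying the extra condition 2(iv) have this property.) Then the sequential unanimity rule 𝒮 associated with S is essential: for every k ∈ {1,…,K−1} there exists a profile R at which 𝒮 differs from the sequential unanimity rule associated with (S_1,…,S_{k−1},S_{k+1},…,S_K). -/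
namespace IsSURule

variable {N : Type*} [DecidableEq N] {K : ℕ} {S : Fin K → Finset N} {g : (N → Bool) → Bool}

theorem apply_indicator_eq_true (hg : IsSURule S g) {C : Finset N} {k : Fin K}
    (hk : S k ⊆ C) (hsplit : ∀ l < k, (S l ∩ C).Nonempty ∧ ¬ S l ⊆ C) :
    g (fun i => decide (i ∈ C)) = true := by
  refine (hg _ true).mpr ⟨k, fun i hi => decide_eq_true (hk hi), fun l hl => ?_⟩
  obtain ⟨⟨i, hi⟩, hnsub⟩ := hsplit l hl
  obtain ⟨j, hj, hjC⟩ := Finset.not_subset.mp hnsub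
  rw [Finset.mem_inter] at hi
  exact ⟨i, hi.1, j, hj, by simp [hi.2, hjC]⟩

theorem exists_subset_of_apply_indicator_eq_true (hg : IsSURule S g) {C : Finset N}
    (h : g (fun i => decide (i ∈ C)) = true) : ∃ m, S m ⊆ C := by
  obtain ⟨m, hunan, -⟩ := (hg _ true).mp h
  exact ⟨m, fun i hi => of_decide_eq_true (hunan i hi)⟩

end IsSURule

theorem stmt10_general {N : Type*} [DecidableEq N] {K : ℕ} (S : Fin (K + 2) → Finset N)
    (hcond : ∀ k : Fin (K + 2), k ≠ Fin.last (K + 1) →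
      ∃ C : Finset N, S k ⊆ C ∧ (∀ l < k, (S l ∩ C).Nonempty ∧ ¬ S l ⊆ C) ∧
        (∀ l : Fin (K + 2), k < l → ¬ S l ⊆ C))
    (g : (N → Bool) → Bool) (hg : IsSURule S g) :
    ∀ k : Fin (K + 2), k ≠ Fin.last (K + 1) →
      ∀ g' : (N → Bool) → Bool, IsSURule (fun l : Fin (K + 1) => S (k.succAbove l)) g' →
        ∃ R : N → Bool, g R ≠ g' R := by
  intro k hk g' hg'
  obtain ⟨C, hkC, hbefore, hafter⟩ := hcond k hk
  refine ⟨fun i => decide (i ∈ C), ?_⟩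
  rw [hg.apply_indicator_eq_true hkC hbefore]
  intro h
  obtain ⟨m, hmC⟩ := hg'.exists_subset_of_apply_indicator_eq_true h.symm
  rcases (k.succAbove_ne m).lt_or_gt with hlt | hgt
  · exact (hbefore _ hlt).2 hmC
  · exact hafter _ hgt hmC

/-- Proposition 2 (essentiality criterion): if for every non-final index k there is a
coalition C containing S_k, meeting but not containing every earlier term, and not
containing any later term, then the sequential unanimity rule associated with S is
essential: deleting any non-final term changes the rule at some profile. -/
theorem stmt10 {N : Type*} [Fintype N] [DecidableEq N] {K : ℕ} (S : Fin (K + 2) → Finset N)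
    (hne : ∀ k, (S k).Nonempty) (hinj : Function.Injective S)
    (hlast : (S (Fin.last (K + 1))).card = 1)
    (hcond : ∀ k : Fin (K + 2), k ≠ Fin.last (K + 1) →
      ∃ C : Finset N, S k ⊆ C ∧ (∀ l < k, (S l ∩ C).Nonempty ∧ ¬ S l ⊆ C) ∧
        (∀ l : Fin (K + 2), k < l → ¬ S l ⊆ C))
    (g : (N → Bool) → Bool) (hg : IsSURule S g) :
    ∀ k : Fin (K + 2), k ≠ Fin.last (K + 1) →
      ∀ g' : (N → Bool) → Bool, IsSURule (fun l : Fin (K + 1) => S (k.succAbove l)) g' →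
        ∃ R : N → Bool, g R ≠ g' R :=
  stmt10_general S hcond g hg
end

section
/- (Theorem 3 / Lemma 1, existence form.) Let N be a finite set of voters and let S = (S_1,…,S_K) be a sequence of nonempty, pairwise distinct subsets of N with S_K a singleton. Then there exists an M-winning coalition set 𝒞 on N such that the M-winning coalition rule associated with 𝒞 agrees with the sequential unanimity rule associated with S at every profile R : N → Bool. -/
section Aux

variable {N : Type*} [Fintype N] [DecidableEq N] {K : ℕ}
variable {S : Fin (K + 1) → Finset N} {g : (N → Bool) → Bool}

/-- Monotonicity of a sequential unanimity rule. -/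
lemma su_mono (hg : IsSURule S g) (R R' : N → Bool) (x : Bool)
    (h : g R = x) (hmon : ∀ i, R i = x → R' i = x) : g R' = x := by
  classical
  obtain ⟨k, hk1, hk2⟩ := (hg R x).mp h
  set T : Finset (Fin (K + 1)) :=
    Finset.univ.filter (fun l => l ≤ k ∧ ∀ i ∈ S l, ∀ j ∈ S l, R' i = R' j) with hT
  have hkT : k ∈ T := by
    simp only [hT, Finset.mem_filter, Finset.mem_univ, true_and]
    exact ⟨le_rfl, fun i hi j hj => by rw [hmon i (hk1 i hi), hmon j (hk1 j hj)]⟩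
  have hTne : T.Nonempty := ⟨k, hkT⟩
  set k' := T.min' hTne with hk'
  have hk'T : k' ∈ T := T.min'_mem hTne
  simp only [hT, Finset.mem_filter, Finset.mem_univ, true_and] at hk'T
  obtain ⟨hk'le, hk'un⟩ := hk'T
  refine (hg R' x).mpr ⟨k', ?_, ?_⟩
  · -- S k' is unanimous for x in R'
    intro j hj
    rcases lt_or_eq_of_le hk'le with hlt | heq
    · obtain ⟨a, ha, b, hb, hab⟩ := hk2 k' hlt
      have hx : R a = x ∨ R b = x := by
        cases x <;> cases hra : R a <;> cases hrb : R b <;> revert hab <;> simp [hra, hrb]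
      rcases hx with h' | h'
      · rw [hk'un j hj a ha, hmon a h']
      · rw [hk'un j hj b hb, hmon b h']
    · exact hmon j (hk1 j (heq ▸ hj))
  · intro l hl
    have hlT : l ∉ T := fun hmem => absurd (T.min'_le l hmem) (not_le.mpr hl)
    simp only [hT, Finset.mem_filter, Finset.mem_univ, true_and, not_and] at hlT
    have := hlT (le_of_lt (lt_of_lt_of_le hl hk'le))
    push_neg at this
    obtain ⟨i, hi, j, hj, hij⟩ := this
    exact ⟨i, hi, j, hj, hij⟩

omit [Fintype N] [DecidableEq N] in
/-- Neutrality of a sequential unanimity rule. -/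
lemma su_neut (hg : IsSURule S g) (R : N → Bool) :
    g (fun i => !(R i)) = !(g R) := by
  obtain ⟨k, hk1, hk2⟩ := (hg R (g R)).mp rfl
  refine (hg (fun i => !(R i)) (!(g R))).mpr ⟨k, fun i hi => by rw [hk1 i hi], ?_⟩
  intro l hl
  obtain ⟨i, hi, j, hj, hij⟩ := hk2 l hl
  exact ⟨i, hi, j, hj, by simp [hij]⟩

end Aux

/-- Theorem 3 / Lemma 1 (existence form): every sequential unanimity rule coincides with
the M-winning coalition rule associated with some M-winning coalition set. -/
theorem stmt11 {N : Type*} [Fintype N] [DecidableEq N] {K : ℕ}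
    (S : Fin (K + 1) → Finset N) (hne : ∀ k, (S k).Nonempty)
    (hinj : Function.Injective S) (hlast : (S (Fin.last K)).card = 1)
    (g : (N → Bool) → Bool) (hg : IsSURule S g) :
    ∃ 𝒞 : Set (Finset N), IsMWCS 𝒞 ∧ IsMWCRule 𝒞 g := by
  classical
  -- "winning for x" coalitions
  set W : Bool → Finset N → Prop :=
    fun x C => ∀ R : N → Bool, (∀ i ∈ C, R i = x) → g R = x with hW
  -- constant profiles
  have hconst : ∀ x : Bool, g (fun _ => x) = x := by
    intro x
    refine (hg _ x).mpr ⟨0, fun i _ => rfl, fun l hl => absurd hl ?_⟩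
    simp [Fin.lt_def]
  -- W is value-independent
  have hWnot : ∀ x C, W x C → W (!x) C := by
    intro x C h R hR
    have h1 : g (fun i => !(R i)) = x := h _ (fun i hi => by rw [hR i hi]; simp)
    have h2 := su_neut hg R
    rw [h1] at h2
    rw [h2]
    simp
  have hWsym : ∀ x C, W true C → W x C := by
    intro x C h
    cases x
    · simpa using hWnot true C h
    · exact h
  -- the empty set is not winning
  have hWempty : ¬ W true ∅ := by
    intro h
    have h1 : g (fun _ => false) = true := h _ (by simp)
    rw [hconst false] at h1
    exact Bool.false_ne_true h1
  -- supersets of winning sets are winning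
  have hWmono : ∀ x (C D : Finset N), C ⊆ D → W x C → W x D := by
    intro x C D hCD h R hR
    exact h R (fun i hi => hR i (hCD hi))
  set 𝒞 : Set (Finset N) := {C | W true C ∧ ∀ D ⊆ C, W true D → D = C} with h𝒞
  -- every winning set contains a minimal winning set
  have hexmin : ∀ C : Finset N, W true C → ∃ C' ∈ 𝒞, C' ⊆ C := by
    intro C
    induction C using Finset.strongInduction with
    | _ C ih =>
      intro hC
      by_cases h : ∀ D ⊆ C, W true D → D = C
      · exact ⟨C, ⟨hC, h⟩, subset_rfl⟩
      · push_neg at h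
        obtain ⟨D, hD, hWD, hneD⟩ := h
        obtain ⟨C', h1, h2⟩ := ih D (Finset.ssubset_iff_subset_ne.mpr ⟨hD, hneD⟩) hWD
        exact ⟨C', h1, h2.trans hD⟩
  -- univ is winning
  have hWuniv : W true Finset.univ := fun R hR => by
    have : R = fun _ => true := funext fun i => hR i (Finset.mem_univ i)
    rw [this, hconst]
  -- disjoint winning sets are impossible
  have hdisj : ∀ C D : Finset N, W true C → W true D → (C ∩ D).Nonempty := by
    intro C D hC hD
    by_contra hcon
    rw [Finset.not_nonempty_iff_eq_empty] at hcon
    set R : N → Bool := fun i => decide (i ∈ C) with hR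
    have h1 : g R = true := hC R (fun i hi => by simp [hR, hi])
    have h2 : g R = false := hWsym false D hD R (fun i hi => by
      simp only [hR, decide_eq_false_iff_not]
      intro hiC
      exact absurd (Finset.mem_inter.mpr ⟨hiC, hi⟩) (by simp [hcon]))
    rw [h1] at h2
    exact Bool.noConfusion h2
  -- key: C intersects all minimal winning sets → C is winning
  have hkey : ∀ C : Finset N, (∀ C'' ∈ 𝒞, (C ∩ C'').Nonempty) → W true C := by
    intro C hC R hR
    by_contra hcon
    have hgR : g R = false := Bool.eq_false_iff.mpr hcon
    set D : Finset N := Finset.univ.filter (fun i => R i = false) with hD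
    have hWD : W false D := by
      intro R' hR'
      refine su_mono hg R R' false hgR (fun i hi => ?_)
      exact hR' i (by simp [hD, hi])
    obtain ⟨D', hD'𝒞, hD'sub⟩ := hexmin D (by simpa using hWnot false D hWD)
    obtain ⟨i, hi⟩ := hC D' hD'𝒞
    rw [Finset.mem_inter] at hi
    have : R i = false := by
      have := hD'sub hi.2
      simp [hD] at this
      exact this
    rw [hR i hi.1] at this
    exact Bool.noConfusion this
  refine ⟨𝒞, ⟨?_, ?_, ?_, ?_⟩, ?_⟩
  · -- nonempty
    obtain ⟨C', hC', _⟩ := hexmin Finset.univ hWuniv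
    exact ⟨C', hC'⟩
  · -- members nonempty
    intro C hC
    rcases C.eq_empty_or_nonempty with h | h
    · exact absurd (h ▸ hC.1) hWempty
    · exact h
  · -- P1
    intro C hC C' hC' hsub
    exact hC'.2 C hsub hC.1
  · -- P2
    intro C
    constructor
    · rintro ⟨C', hC', hsub⟩ C'' hC''
      obtain ⟨i, hi⟩ := hdisj C' C'' hC'.1 hC''.1
      rw [Finset.mem_inter] at hi
      exact ⟨i, Finset.mem_inter.mpr ⟨hsub hi.1, hi.2⟩⟩
    · intro h
      obtain ⟨C', hC', hsub⟩ := hexmin C (hkey C h)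
      exact ⟨C', hC', hsub⟩
  · -- IsMWCRule
    intro R x
    constructor
    · intro hgR
      set C : Finset N := Finset.univ.filter (fun i => R i = x) with hC
      have hWC : W x C := by
        intro R' hR'
        refine su_mono hg R R' x hgR (fun i hi => hR' i (by simp [hC, hi]))
      have hWC' : W true C := by
        cases x
        · simpa using hWnot false C hWC
        · exact hWC
      obtain ⟨C', hC', hsub⟩ := hexmin C hWC'
      exact ⟨C', hC', fun i hi => by
        have := hsub hi; simp [hC] at this; exact this⟩
    · rintro ⟨C, hC𝒞, hC⟩
      exact hWsym x C hC𝒞.1 R hC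
end

section
/- (Proposition 3, first part.) Let N be a finite set of voters, f a neutral and strategy-proof full-domain rule, and 𝒞 an M-winning coalition set on N. Then the M-winning coalition rule with default f, 𝒞^f, is well-defined (no two members of 𝒞 can be unanimous for opposite strict preferences at the same full profile), and 𝒞^f is neutral and strategy-proof. -/
/-- A full-domain rule is neutral if it commutes with flipping the two candidates
(indifference/ties are mapped to themselves). -/
def FullNeutral {N : Type*} (g : (N → Option Bool) → Option Bool) : Prop :=
  ∀ R : N → Option Bool, g (fun i => Option.map not (R i)) = Option.map not (g R)

/-- The ranking of outcomes by a voter with strict preference for `x`: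
`some x ≻ none ≻ some (!x)`. -/
def rankOutcome (x : Bool) : Option Bool → ℕ
  | none => 1
  | some y => if y = x then 2 else 0

/-- A full-domain rule is strategy-proof if no voter with a strict preference can
obtain a strictly better-ranked outcome by misreporting. -/
def FullStrategyProof {N : Type*} [DecidableEq N]
    (g : (N → Option Bool) → Option Bool) : Prop :=
  ∀ (R : N → Option Bool) (i : N) (x : Bool), R i = some x →
    ∀ r : Option Bool, rankOutcome x (g (Function.update R i r)) ≤ rankOutcome x (g R)

/-- `g` is the M-winning coalition rule with default `f` associated with `𝒞`. -/
def IsMWCFullRule {N : Type*} (𝒞 : Set (Finset N))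
    (f g : (N → Option Bool) → Option Bool) : Prop :=
  ∀ R : N → Option Bool,
    (∀ x : Bool, (∃ C ∈ 𝒞, ∀ i ∈ C, R i = some x) → g R = some x) ∧
    ((¬ ∃ x : Bool, ∃ C ∈ 𝒞, ∀ i ∈ C, R i = some x) → g R = f R)

/-- `g` is the sequential unanimity rule with default `f` associated with `S`. -/
def IsSUFullRule {N : Type*} {K : ℕ} (S : Fin K → Finset N)
    (f g : (N → Option Bool) → Option Bool) : Prop :=
  ∀ R : N → Option Bool,
    (∀ x : Bool, (∃ k : Fin K, (∀ i ∈ S k, R i = some x) ∧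
        ∀ l < k, ∃ i ∈ S l, R i = some x) → g R = some x) ∧
    ((¬ ∃ x : Bool, ∃ k : Fin K, (∀ i ∈ S k, R i = some x) ∧
        ∀ l < k, ∃ i ∈ S l, R i = some x) → g R = f R)

/-! Taking `C = C'` in (P2) shows that any two winning coalitions intersect, so no profile makes
two of them unanimous for opposite candidates. Neutrality of `𝒞^f` is inherited from `f`, as
flipping a profile flips every coalition verdict. For strategy-proofness, let voter `i` strictly
prefer `x`: a coalition unanimous for `!x` at the sincere profile excludes `i`, so it stays
unanimous after any misreport; a coalition unanimous for `x` after a misreport is already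
unanimous at the sincere profile; in the remaining case both outcomes are those of `f`. -/

section

variable {N : Type*}

def CoalitionUnanimous (𝒞 : Set (Finset N)) (R : N → Option Bool) (x : Bool) : Prop :=
  ∃ C ∈ 𝒞, ∀ i ∈ C, R i = some x

theorem coalitionUnanimous_map_not_iff {𝒞 : Set (Finset N)} {R : N → Option Bool} {x : Bool} :
    CoalitionUnanimous 𝒞 (fun i => Option.map not (R i)) x ↔ CoalitionUnanimous 𝒞 R (!x) := by
  have key : ∀ o : Option Bool, Option.map not o = some x ↔ o = some (!x) := by
    intro o; cases o <;> cases x <;> simp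
  simp only [CoalitionUnanimous, key]

theorem CoalitionUnanimous.update [DecidableEq N] {𝒞 : Set (Finset N)} {R : N → Option Bool}
    {x : Bool} (hR : CoalitionUnanimous 𝒞 R x) {i : N} {r : Option Bool}
    (hr : R i = some x → r = some x) : CoalitionUnanimous 𝒞 (Function.update R i r) x := by
  obtain ⟨C, hC, hCx⟩ := hR
  refine ⟨C, hC, fun j hj => ?_⟩
  rcases eq_or_ne j i with rfl | hji
  · simpa using hr (hCx j hj)
  · rw [Function.update_of_ne hji, hCx j hj]

theorem IsMWCS.inter_nonempty [DecidableEq N] {𝒞 : Set (Finset N)} (h𝒞 : IsMWCS 𝒞)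
    {C C' : Finset N} (hC : C ∈ 𝒞) (hC' : C' ∈ 𝒞) : (C ∩ C').Nonempty :=
  (h𝒞.2.2.2 C).1 ⟨C, hC, subset_rfl⟩ C' hC'

theorem IsMWCS.eq_of_coalitionUnanimous [DecidableEq N] {𝒞 : Set (Finset N)} (h𝒞 : IsMWCS 𝒞)
    {R : N → Option Bool} {x y : Bool} (hx : CoalitionUnanimous 𝒞 R x)
    (hy : CoalitionUnanimous 𝒞 R y) : x = y := by
  obtain ⟨C, hC, hCx⟩ := hx
  obtain ⟨C', hC', hC'y⟩ := hy
  obtain ⟨i, hi⟩ := h𝒞.inter_nonempty hC hC'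
  rw [Finset.mem_inter] at hi
  exact Option.some_injective _ ((hCx i hi.1).symm.trans (hC'y i hi.2))

theorem rankOutcome_le_rankOutcome_some_self (x : Bool) (o : Option Bool) :
    rankOutcome x o ≤ rankOutcome x (some x) := by
  cases o with
  | none => simp [rankOutcome]
  | some y => by_cases h : y = x <;> simp [rankOutcome, h]

theorem rankOutcome_some_of_ne {x y : Bool} (h : y ≠ x) : rankOutcome x (some y) = 0 := by
  simp [rankOutcome, h]

namespace IsMWCFullRule

variable {𝒞 : Set (Finset N)} {f g : (N → Option Bool) → Option Bool}

theorem apply_of_coalitionUnanimous (hg : IsMWCFullRule 𝒞 f g) {R : N → Option Bool} {x : Bool}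
    (hR : CoalitionUnanimous 𝒞 R x) : g R = some x :=
  (hg R).1 x hR

theorem apply_of_not_coalitionUnanimous (hg : IsMWCFullRule 𝒞 f g) {R : N → Option Bool}
    (hR : ¬ ∃ x, CoalitionUnanimous 𝒞 R x) : g R = f R :=
  (hg R).2 hR

theorem fullNeutral (hg : IsMWCFullRule 𝒞 f g) (hf : FullNeutral f) : FullNeutral g := by
  intro R
  by_cases hR : ∃ x, CoalitionUnanimous 𝒞 R x
  · obtain ⟨x, hx⟩ := hR
    have hx' : CoalitionUnanimous 𝒞 (fun i => Option.map not (R i)) (!x) :=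
      coalitionUnanimous_map_not_iff.2 (by rwa [Bool.not_not])
    rw [hg.apply_of_coalitionUnanimous hx', hg.apply_of_coalitionUnanimous hx]
    rfl
  · have hR' : ¬ ∃ x, CoalitionUnanimous 𝒞 (fun i => Option.map not (R i)) x :=
      fun ⟨x, hx⟩ => hR ⟨!x, coalitionUnanimous_map_not_iff.1 hx⟩
    rw [hg.apply_of_not_coalitionUnanimous hR', hg.apply_of_not_coalitionUnanimous hR, hf]

theorem fullStrategyProof [DecidableEq N] (hg : IsMWCFullRule 𝒞 f g) (hf : FullStrategyProof f) :
    FullStrategyProof g := by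
  intro R i x hx r
  by_cases hR : ∃ y, CoalitionUnanimous 𝒞 R y
  · obtain ⟨y, hy⟩ := hR
    rw [hg.apply_of_coalitionUnanimous hy]
    by_cases hyx : y = x
    · subst hyx
      exact rankOutcome_le_rankOutcome_some_self y _
    · have hy' := hy.update (i := i) (r := r) fun hiy =>
        absurd (Option.some_injective _ (hiy.symm.trans hx)) hyx
      rw [hg.apply_of_coalitionUnanimous hy']
  · rw [hg.apply_of_not_coalitionUnanimous hR]
    by_cases hR' : ∃ y, CoalitionUnanimous 𝒞 (Function.update R i r) y
    · obtain ⟨y, hy⟩ := hR'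
      have hyx : y ≠ x := by
        rintro rfl
        have := hy.update (i := i) (r := R i) fun _ => hx
        rw [Function.update_idem, Function.update_eq_self] at this
        exact hR ⟨y, this⟩
      rw [hg.apply_of_coalitionUnanimous hy, rankOutcome_some_of_ne hyx]
      exact Nat.zero_le _
    · rw [hg.apply_of_not_coalitionUnanimous hR']
      exact hf R i x hx r

end IsMWCFullRule

end

theorem stmt12_general {N : Type*} [DecidableEq N] (𝒞 : Set (Finset N))
    (h𝒞 : IsMWCS 𝒞) (f : (N → Option Bool) → Option Bool)
    (hfN : FullNeutral f) (hfSP : FullStrategyProof f) :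
    (∀ R : N → Option Bool, ¬ ∃ C ∈ 𝒞, ∃ C' ∈ 𝒞, ∃ x : Bool,
        (∀ i ∈ C, R i = some x) ∧ (∀ j ∈ C', R j = some (!x))) ∧
    (∀ g : (N → Option Bool) → Option Bool,
        IsMWCFullRule 𝒞 f g → FullNeutral g ∧ FullStrategyProof g) := by
  refine ⟨?_, fun g hg => ⟨hg.fullNeutral hfN, hg.fullStrategyProof hfSP⟩⟩
  rintro R ⟨C, hC, C', hC', x, hCx, hC'x⟩
  exact Bool.self_ne_not x (h𝒞.eq_of_coalitionUnanimous ⟨C, hC, hCx⟩ ⟨C', hC', hC'x⟩)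

/-- Proposition 3 (first part): the M-winning coalition rule with a neutral,
strategy-proof default is well-defined, neutral and strategy-proof. -/
theorem stmt12 {N : Type*} [Fintype N] [DecidableEq N] (𝒞 : Set (Finset N))
    (h𝒞 : IsMWCS 𝒞) (f : (N → Option Bool) → Option Bool)
    (hfN : FullNeutral f) (hfSP : FullStrategyProof f) :
    (∀ R : N → Option Bool, ¬ ∃ C ∈ 𝒞, ∃ C' ∈ 𝒞, ∃ x : Bool,
        (∀ i ∈ C, R i = some x) ∧ (∀ j ∈ C', R j = some (!x))) ∧
    (∀ g : (N → Option Bool) → Option Bool,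
        IsMWCFullRule 𝒞 f g → FullNeutral g ∧ FullStrategyProof g) :=
  stmt12_general 𝒞 h𝒞 f hfN hfSP
end

section
/- (Proposition 3, second part.) Let N be a finite set of voters, f a neutral and strategy-proof full-domain rule, and S = (S_1,…,S_K) a sequence of nonempty, pairwise distinct subsets of N with S_K a singleton. Then the sequential unanimity rule with default f, 𝒮^f, is well-defined (the candidate x in its defining condition is unique when it exists), and 𝒮^f is neutral and strategy-proof. -/
def SUSelects {ι N : Type*} [LT ι] (S : ι → Finset N) (R : N → Option Bool) (x : Bool) :
    Prop :=
  ∃ k, (∀ i ∈ S k, R i = some x) ∧ ∀ l < k, ∃ i ∈ S l, R i = some x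

namespace SUSelects

variable {ι N : Type*} {S : ι → Finset N} {R R' : N → Option Bool} {x y : Bool}

theorem eq [LinearOrder ι] (hne : ∀ k, (S k).Nonempty)
    (hx : SUSelects S R x) (hy : SUSelects S R y) : x = y := by
  obtain ⟨k, hkx, hlx⟩ := hx
  obtain ⟨m, hmy, hly⟩ := hy
  rcases lt_trichotomy k m with h | rfl | h
  · obtain ⟨i, hi, hiy⟩ := hly k h
    simpa [hkx i hi] using hiy
  · obtain ⟨i, hi⟩ := hne k
    simpa [hkx i hi] using hmy i hi
  · obtain ⟨i, hi, hix⟩ := hlx m h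
    simpa [hmy i hi] using hix.symm

theorem mono [LT ι] (h : SUSelects S R x) (hRR' : ∀ j, R j = some x → R' j = some y) :
    SUSelects S R' y := by
  obtain ⟨k, hk, hl⟩ := h
  refine ⟨k, fun j hj => hRR' j (hk j hj), fun l hlk => ?_⟩
  obtain ⟨j, hj, hjx⟩ := hl l hlk
  exact ⟨j, hj, hRR' j hjx⟩

theorem map_not_iff [LT ι] :
    SUSelects S (fun i => Option.map not (R i)) x ↔ SUSelects S R (!x) := by
  have hflip : ∀ j, Option.map not (R j) = some x ↔ R j = some (!x) := by
    intro j
    cases R j <;> cases x <;> simp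
  exact ⟨fun h => h.mono fun j => (hflip j).1, fun h => h.mono fun j => (hflip j).2⟩

variable [DecidableEq N] {i : N} {r : Option Bool}

theorem update_of_ne [LT ι] (h : SUSelects S R x) (hi : R i ≠ some x) :
    SUSelects S (Function.update R i r) x :=
  h.mono fun j hj => by
    rwa [Function.update_of_ne (by rintro rfl; exact hi hj)]

theorem of_update [LT ι] (h : SUSelects S (Function.update R i r) x) (hi : R i = some x) :
    SUSelects S R x :=
  h.mono fun j hj => by
    by_cases hji : j = i
    · exact hji ▸ hi
    · rwa [Function.update_of_ne hji] at hj

end SUSelects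

theorem not_exists_suSelects {ι N : Type*} [LT ι] {S : ι → Finset N} {R : N → Option Bool}
    {x : Bool} (hx : ¬ SUSelects S R x) (hnx : ¬ SUSelects S R (!x)) :
    ¬ ∃ y, SUSelects S R y := by
  rintro ⟨y, hy⟩
  rcases Bool.eq_or_eq_not y x with rfl | rfl <;> contradiction

theorem rankOutcome_le_two (x : Bool) (o : Option Bool) : rankOutcome x o ≤ 2 := by
  cases o <;> simp only [rankOutcome] <;> (try split) <;> omega

theorem rankOutcome_some_self (x : Bool) : rankOutcome x (some x) = 2 := by
  simp [rankOutcome]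

theorem rankOutcome_some_not (x : Bool) : rankOutcome x (some (!x)) = 0 := by
  cases x <;> simp [rankOutcome]

namespace IsSUFullRule

variable {N : Type*} {K : ℕ} {S : Fin K → Finset N} {f g : (N → Option Bool) → Option Bool}

theorem eq_some (hg : IsSUFullRule S f g) {R : N → Option Bool} {x : Bool}
    (hx : SUSelects S R x) : g R = some x :=
  (hg R).1 x hx

theorem eq_default (hg : IsSUFullRule S f g) {R : N → Option Bool}
    (hR : ¬ ∃ x, SUSelects S R x) : g R = f R :=
  (hg R).2 hR

theorem fullNeutral (hg : IsSUFullRule S f g) (hf : FullNeutral f) : FullNeutral g := by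
  intro R
  by_cases hR : ∃ x, SUSelects S R x
  · obtain ⟨x, hx⟩ := hR
    have hflip := (SUSelects.map_not_iff (x := !x)).2 (by rwa [Bool.not_not])
    rw [hg.eq_some hx, hg.eq_some hflip]
    rfl
  · have hR' : ¬ ∃ x, SUSelects S (fun i => Option.map not (R i)) x :=
      fun ⟨x, hx⟩ => hR ⟨!x, SUSelects.map_not_iff.1 hx⟩
    rw [hg.eq_default hR, hg.eq_default hR', hf R]

theorem fullStrategyProof [DecidableEq N] (hg : IsSUFullRule S f g)
    (hf : FullStrategyProof f) : FullStrategyProof g := by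
  intro R i x hix r
  set R' := Function.update R i r
  by_cases hx : SUSelects S R x
  · rw [hg.eq_some hx, rankOutcome_some_self]
    exact rankOutcome_le_two x _
  by_cases hnx' : SUSelects S R' (!x)
  · rw [hg.eq_some hnx', rankOutcome_some_not]
    exact Nat.zero_le _
  have hx' : ¬ SUSelects S R' x := fun h => hx (h.of_update hix)
  have hnx : ¬ SUSelects S R (!x) := fun h =>
    hnx' (h.update_of_ne (by simp [hix]))
  rw [hg.eq_default (not_exists_suSelects hx hnx),
    hg.eq_default (not_exists_suSelects hx' hnx')]
  exact hf R i x hix r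

end IsSUFullRule

theorem stmt13_general {N : Type*} [DecidableEq N] {K : ℕ}
    (S : Fin (K + 1) → Finset N) (hne : ∀ k, (S k).Nonempty)
    (f : (N → Option Bool) → Option Bool)
    (hfN : FullNeutral f) (hfSP : FullStrategyProof f) :
    (∀ (R : N → Option Bool) (x y : Bool),
        (∃ k : Fin (K + 1), (∀ i ∈ S k, R i = some x) ∧
          ∀ l < k, ∃ i ∈ S l, R i = some x) →
        (∃ k : Fin (K + 1), (∀ i ∈ S k, R i = some y) ∧
          ∀ l < k, ∃ i ∈ S l, R i = some y) → x = y) ∧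
    (∀ g : (N → Option Bool) → Option Bool,
        IsSUFullRule S f g → FullNeutral g ∧ FullStrategyProof g) :=
  ⟨fun _ _ _ hx hy => SUSelects.eq hne hx hy,
    fun _ hg => ⟨hg.fullNeutral hfN, hg.fullStrategyProof hfSP⟩⟩

/-- Proposition 3 (second part): the sequential unanimity rule with a neutral,
strategy-proof default is well-defined (the selected strict candidate is unique when it
exists), neutral, and strategy-proof. -/
theorem stmt13 {N : Type*} [Fintype N] [DecidableEq N] {K : ℕ}
    (S : Fin (K + 1) → Finset N) (hne : ∀ k, (S k).Nonempty)
    (hinj : Function.Injective S) (hlast : (S (Fin.last K)).card = 1)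
    (f : (N → Option Bool) → Option Bool)
    (hfN : FullNeutral f) (hfSP : FullStrategyProof f) :
    (∀ (R : N → Option Bool) (x y : Bool),
        (∃ k : Fin (K + 1), (∀ i ∈ S k, R i = some x) ∧
          ∀ l < k, ∃ i ∈ S l, R i = some x) →
        (∃ k : Fin (K + 1), (∀ i ∈ S k, R i = some y) ∧
          ∀ l < k, ∃ i ∈ S l, R i = some y) → x = y) ∧
    (∀ g : (N → Option Bool) → Option Bool,
        IsSUFullRule S f g → FullNeutral g ∧ FullStrategyProof g) :=
  stmt13_general S hne f hfN hfSP
end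

section
/- (Theorems 4 and 5, combined form.) Let N be a finite set of voters, 𝒞 an M-winning coalition set on N, and S = (S_1,…,S_K) a sequence of nonempty, pairwise distinct subsets of N with S_K a singleton. Suppose the M-winning coalition rule associated with 𝒞 and the sequential unanimity rule associated with S agree at every strict profile R : N → Bool. Then for every neutral and strategy-proof full-domain rule f and every full profile R̃ : N → Option Bool, 𝒞^f R̃ = 𝒮^f R̃. -/
/-!
Whether `𝒞^f` (resp. `𝒮^f`) overrides its default by `some x` at a full profile `R̃`
depends only on which voters report `some x`. Encode this set as the strict profile sending those voters
to `x` and everybody else to `!x`: the winning-coalition condition of `𝒞^f` holds at `R̃`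
exactly when the M-winning coalition rule selects `x` there, and the sequential
condition of `𝒮^f` exactly when the sequential unanimity rule does. As the two strict
rules agree, `𝒞^f` and `𝒮^f` fall back on the default `f` at the same profiles and
select the same candidate elsewhere.
-/

section

variable {N : Type*}

def strictProfile (R : N → Option Bool) (x : Bool) : N → Bool :=
  fun i => if R i = some x then x else !x

theorem strictProfile_eq_iff (R : N → Option Bool) (x : Bool) (i : N) :
    strictProfile R x i = x ↔ R i = some x := by
  by_cases h : R i = some x <;> simp [strictProfile, h]

theorem IsMWCRule.apply_strictProfile_eq_iff {𝒞 : Set (Finset N)} {f : (N → Bool) → Bool}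
    (hf : IsMWCRule 𝒞 f) (R : N → Option Bool) (x : Bool) :
    f (strictProfile R x) = x ↔ ∃ C ∈ 𝒞, ∀ i ∈ C, R i = some x := by
  simp only [hf _ x, strictProfile_eq_iff]

theorem IsSURule.apply_strictProfile_eq_iff {K : ℕ} {S : Fin K → Finset N}
    {g : (N → Bool) → Bool} (hg : IsSURule S g) (R : N → Option Bool) (x : Bool) :
    g (strictProfile R x) = x ↔
      ∃ k, (∀ i ∈ S k, R i = some x) ∧ ∀ l < k, ∃ i ∈ S l, R i = some x := by
  simp only [hg _ x, strictProfile_eq_iff]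
  constructor
  · rintro ⟨k, hk, hsplit⟩
    refine ⟨k, hk, fun l hl => ?_⟩
    obtain ⟨i, hi, j, hj, hij⟩ := hsplit l hl
    -- Two distinct Boolean votes: one of them is `x`.
    by_cases hix : strictProfile R x i = x
    · exact ⟨i, hi, (strictProfile_eq_iff R x i).1 hix⟩
    · refine ⟨j, hj, (strictProfile_eq_iff R x j).1 ?_⟩
      revert hij hix
      cases strictProfile R x i <;> cases strictProfile R x j <;> cases x <;> simp
  · rintro ⟨k, hk, hmet⟩
    -- The first unanimous term `m` is the one selected by the sequential unanimity rule.
    obtain ⟨m, hm, hmin⟩ :=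
      wellFounded_lt.has_min {k | ∀ i ∈ S k, R i = some x} ⟨k, hk⟩
    have hmk : m ≤ k := not_lt.1 (hmin k hk)
    refine ⟨m, hm, fun l hl => ?_⟩
    obtain ⟨i, hi, hix⟩ := hmet l (hl.trans_le hmk)
    obtain ⟨j, hj, hjx⟩ : ∃ j ∈ S l, R j ≠ some x := by
      by_contra! h
      exact hmin l h hl
    refine ⟨i, hi, j, hj, fun hij => hjx ?_⟩
    rw [← strictProfile_eq_iff, ← hij, strictProfile_eq_iff]
    exact hix

end

theorem stmt15_general {N : Type*} {K : ℕ}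
    (𝒞 : Set (Finset N))
    (S : Fin (K + 1) → Finset N)
    (f0 g0 : (N → Bool) → Bool) (hf0 : IsMWCRule 𝒞 f0) (hg0 : IsSURule S g0)
    (hagree : ∀ R : N → Bool, f0 R = g0 R)
    (f : (N → Option Bool) → Option Bool)
    (g g' : (N → Option Bool) → Option Bool)
    (hg : IsMWCFullRule 𝒞 f g) (hg' : IsSUFullRule S f g')
    (R : N → Option Bool) : g R = g' R := by
  have hwins : ∀ x : Bool, (∃ C ∈ 𝒞, ∀ i ∈ C, R i = some x) ↔
      ∃ k, (∀ i ∈ S k, R i = some x) ∧ ∀ l < k, ∃ i ∈ S l, R i = some x := fun x => by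
    rw [← hf0.apply_strictProfile_eq_iff, ← hg0.apply_strictProfile_eq_iff, hagree]
  by_cases h : ∃ x : Bool, ∃ C ∈ 𝒞, ∀ i ∈ C, R i = some x
  · obtain ⟨x, hx⟩ := h
    rw [(hg R).1 x hx, (hg' R).1 x ((hwins x).1 hx)]
  · have h' : ¬ ∃ x : Bool, ∃ k, (∀ i ∈ S k, R i = some x) ∧
        ∀ l < k, ∃ i ∈ S l, R i = some x :=
      fun ⟨x, hx⟩ => h ⟨x, (hwins x).2 hx⟩
    rw [(hg R).2 h, (hg' R).2 h']

/-- Theorems 4 and 5 (combined form): if the M-winning coalition rule associated with 𝒞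
and the sequential unanimity rule associated with S agree at every strict profile, then
for every neutral and strategy-proof full-domain default f, the rules 𝒞^f and 𝒮^f agree
at every full profile. -/
theorem stmt15 {N : Type*} [Fintype N] [DecidableEq N] {K : ℕ}
    (𝒞 : Set (Finset N)) (h𝒞 : IsMWCS 𝒞)
    (S : Fin (K + 1) → Finset N) (hne : ∀ k, (S k).Nonempty)
    (hinj : Function.Injective S) (hlast : (S (Fin.last K)).card = 1)
    (f0 g0 : (N → Bool) → Bool) (hf0 : IsMWCRule 𝒞 f0) (hg0 : IsSURule S g0)
    (hagree : ∀ R : N → Bool, f0 R = g0 R)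
    (f : (N → Option Bool) → Option Bool)
    (hfN : FullNeutral f) (hfSP : FullStrategyProof f)
    (g g' : (N → Option Bool) → Option Bool)
    (hg : IsMWCFullRule 𝒞 f g) (hg' : IsSUFullRule S f g')
    (R : N → Option Bool) : g R = g' R :=
  stmt15_general 𝒞 S f0 g0 hf0 hg0 hagree f g g' hg hg' R
end

section
/- (Footnote claim on winning coalitions.) Let N be a finite set of voters and f a strategy-proof rule. Then a subset C ⊆ N is a winning coalition of f (for every x : Bool, f maps the profile assigning x on C and !x off C to x) if and only if for every x : Bool and every profile R with R i = x for all i ∈ C, f R = x. In particular, strategy-proofness implies the monotonicity property: if f R = x and R' is a profile with {i : R i = x} ⊆ {i : R' i = x}, then f R' = x. -/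
/-- C is a winning coalition of f: for each candidate x, the profile where exactly the
members of C vote x is mapped by f to x. -/
def WinningCoalition {N : Type*} [DecidableEq N] (f : (N → Bool) → Bool)
    (C : Finset N) : Prop :=
  ∀ x : Bool, f (fun i => if i ∈ C then x else !x) = x

/-- Footnote claim: for a strategy-proof rule, C is a winning coalition iff unanimity
of C for x forces outcome x at every profile; in particular strategy-proofness implies
monotonicity. -/
theorem stmt16 {N : Type*} [Fintype N] [DecidableEq N] (f : (N → Bool) → Bool)
    (hSP : StrategyProof f) :
    (∀ C : Finset N, WinningCoalition f C ↔
      ∀ (x : Bool) (R : N → Bool), (∀ i ∈ C, R i = x) → f R = x) ∧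
    (∀ (R R' : N → Bool) (x : Bool), f R = x → (∀ i, R i = x → R' i = x) →
      f R' = x) := by
  have step : ∀ (R : N → Bool) (i : N) (x : Bool), f R = x →
      f (Function.update R i x) = x := by
    intro R i x hR
    have := hSP (Function.update R i x) i (R i)
    simp only [Function.update_idem, Function.update_eq_self, Function.update_self] at this
    exact this hR
  have key : ∀ (x : Bool) (s : Finset N) (R : N → Bool), f R = x →
      f (fun i => if i ∈ s then x else R i) = x := by
    intro x s
    induction s using Finset.induction_on with
    | empty => intro R hR; simpa using hR
    | insert a s ha ih =>
      intro R hR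
      have h1 : (fun i => if i ∈ insert a s then x else R i)
          = Function.update (fun i => if i ∈ s then x else R i) a x := by
        funext j
        by_cases hj : j = a
        · subst hj; simp
        · simp [Function.update_of_ne hj, hj, Finset.mem_insert]
      rw [h1]
      exact step _ a x (ih R hR)
  have mono : ∀ (R R' : N → Bool) (x : Bool), f R = x → (∀ i, R i = x → R' i = x) →
      f R' = x := by
    intro R R' x hR h
    have h1 : (fun i => if i ∈ Finset.univ.filter (fun i => R' i = x) then x else R i)
        = R' := by
      funext i
      by_cases hi : R' i = x
      · simp [hi]
      · have hRi : R i ≠ x := fun hh => hi (h i hh)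
        simp only [Finset.mem_filter, Finset.mem_univ, true_and, hi, if_false]
        revert hRi hi
        cases R i <;> cases R' i <;> cases x <;> simp
    have := key x (Finset.univ.filter (fun i => R' i = x)) R hR
    rwa [h1] at this
  refine ⟨fun C => ⟨fun hW x R hR => ?_, fun h x => h x _ (fun i hi => by simp [hi])⟩, mono⟩
  exact mono _ R x (hW x) (fun i hi => by
    by_cases hiC : i ∈ C
    · exact hR i hiC
    · simp [hiC] at hi)
end

section
/- (The strong simple game 𝒞² is non-weighted.) Let N = {1,2,…,8} and let 𝒞² be the collection of subsets {{1,2,3}, {1,2,4}, {1,2,7}, {2,3,4}, {1,3,5,6}, {1,3,5,7}, {1,3,6,7}, {1,4,5,6,8}, {2,3,5}, {2,3,6}, {2,3,8}, {2,5,7}, {2,6,7}, {2,4,5,6}, {3,4,7}}. Then there exist no weights w : N → ℝ and threshold q ∈ ℝ such that 𝒞² = {C ⊆ N : Σ_{i ∈ C} w i ≥ q}; that is, the strong simple game (N, 𝒞²) is non-weighted. (This follows from the trade between C₁ = {2,3,6} and C₂ = {3,4,7}, which produces the losing coalitions {2,3,7} and {3,4,6}.) -/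
/-- The M-winning coalition set 𝒞² of Section 2 (voters 1,…,8). -/
def C2 : Set (Finset ℕ) :=
  { {1,2,3}, {1,2,4}, {1,2,7}, {2,3,4}, {1,3,5,6}, {1,3,5,7}, {1,3,6,7},
    {1,4,5,6,8}, {2,3,5}, {2,3,6}, {2,3,8}, {2,5,7}, {2,6,7}, {2,4,5,6}, {3,4,7} }

/- Trade robustness of weighted games: a trade preserves the union and the intersection
of the pair, hence its total weight. -/
theorem le_sum_or_le_sum_of_trade {ι : Type*} [DecidableEq ι] {w : ι → ℝ} {q : ℝ}
    {A B A' B' : Finset ι} (hunion : A ∪ B = A' ∪ B') (hinter : A ∩ B = A' ∩ B')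
    (hA : q ≤ ∑ i ∈ A, w i) (hB : q ≤ ∑ i ∈ B, w i) :
    q ≤ ∑ i ∈ A', w i ∨ q ≤ ∑ i ∈ B', w i := by
  have htotal : ∑ i ∈ A, w i + ∑ i ∈ B, w i = ∑ i ∈ A', w i + ∑ i ∈ B', w i := by
    rw [← Finset.sum_union_inter, hunion, hinter, Finset.sum_union_inter]
  by_contra! hlose
  linarith [hlose.1, hlose.2]

/-- The strong simple game (N, 𝒞²) with N = {1,…,8} is non-weighted: there are no
weights and threshold representing 𝒞² as the family of subsets of N whose total
weight meets the threshold. -/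
theorem stmt18 :
    ¬ ∃ (w : ℕ → ℝ) (q : ℝ), ∀ C : Finset ℕ, C ⊆ Finset.Icc 1 8 →
      (C ∈ C2 ↔ q ≤ ∑ i ∈ C, w i) := by
  rintro ⟨w, q, hw⟩
  have h236 := (hw {2,3,6} (by decide)).mp (by simp [C2])
  have h347 := (hw {3,4,7} (by decide)).mp (by simp [C2])
  have h237 : ¬ q ≤ ∑ i ∈ {2,3,7}, w i := (hw {2,3,7} (by decide)).not.mp (by simp [C2]; decide)
  have h346 : ¬ q ≤ ∑ i ∈ {3,4,6}, w i := (hw {3,4,6} (by decide)).not.mp (by simp [C2]; decide)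
  exact (le_sum_or_le_sum_of_trade (A' := {2,3,7}) (B' := {3,4,6}) (by decide) (by decide)
    h236 h347).elim h237 h346
end
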